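/- Let n ≥ 1, let Z be a closed subset of Euclidean n-space (EuclideanSpace ℝ (Fin n)) whose Hausdorff dimension is strictly less than n − 1, and let U be a convex open subset of Euclidean n-space. Then for any points p, q ∈ U \ Z and any ε > 0, there exists a continuous path γ : [0,1] → U \ Z with γ(0) = p, γ(1) = q, whose length (total variation) is at most dist(p,q) + ε. In particular, the intrinsic (path) distance on U \ Z restricted from U equals the distance of the ambient space. -/

import Mathlib

/-!
Seen from a light source at `p ∉ Z`, the set `Z` casts the shadow
`{p + r • (z - p) | z ∈ Z, r ≥ 1}`, a smooth image of `Z × [1, ∞)`; hence its Hausdorff dimension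
is at most `dimH Z + 1 < n`, and the shadows cast from `p` and from `q` together have dense
complement. So there is a point `m` outside both shadows, as close to the midpoint of `p` and `q`
as we like, in particular in `U`. The segments `[p, m]` and `[m, q]` lie in `U` by convexity and
miss `Z`, since a point of `Z` on `[p, m]` would put `m` in the shadow from `p`; the broken path
`p → m → q` has length `dist p m + dist m q < dist p q + ε`.

The bound `dimH (A × [a, b]) ≤ dimH A + 1` comes from covers: a piece of diameter `c` of a cover
of `A`, times the at most `(b - a) / c + 1` subintervals of `[a, b]` of length `c`, gives pieces of
diameter `c` with total `(d + 1)`-th power at most `(b - a + 1) c ^ d` when `c ≤ 1`.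
-/

open ENNReal NNReal Set MeasureTheory Metric Filter AffineMap

theorem ediam_prod_le {X Y : Type*} [PseudoEMetricSpace X] [PseudoEMetricSpace Y]
    (s : Set X) (t : Set Y) : ediam (s ×ˢ t) ≤ max (ediam s) (ediam t) :=
  ediam_le_iff.2 fun _ hx _ hy => by
    rw [Prod.edist_eq]
    exact max_le_max (edist_le_ediam_of_mem hx.1 hy.1) (edist_le_ediam_of_mem hx.2 hy.2)

theorem Icc_subset_biUnion_Icc_add_mul {a b c : ℝ} (hc : 0 < c) :
    Icc a b ⊆ ⋃ j ∈ Finset.range (⌊(b - a) / c⌋₊ + 1), Icc (a + j * c) (a + (j + 1) * c) := by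
  rintro y ⟨hay, hyb⟩
  set j := ⌊(y - a) / c⌋₊
  have hj : (j : ℝ) * c ≤ y - a :=
    (le_div_iff₀ hc).1 (Nat.floor_le (div_nonneg (by linarith) hc.le))
  have hj' : y - a < (j + 1) * c := (div_lt_iff₀ hc).1 (Nat.lt_floor_add_one _)
  have hjN : j ≤ ⌊(b - a) / c⌋₊ := Nat.floor_mono (by gcongr)
  exact mem_biUnion (Finset.mem_range.2 (Nat.lt_succ_of_le hjN)) ⟨by linarith, by linarith⟩

theorem natCast_floor_div_add_one_mul_le {a b : ℝ} {c : ℝ≥0} (hab : a ≤ b) (hc : 0 < c)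
    (hc1 : c ≤ 1) : ((⌊(b - a) / c⌋₊ + 1 : ℕ) : ℝ≥0∞) * c ≤ ENNReal.ofReal (b - a + 1) := by
  have hc' : (0 : ℝ) < c := hc
  have hc1' : (c : ℝ) ≤ 1 := hc1
  have hfloor : (⌊(b - a) / c⌋₊ : ℝ) * c ≤ b - a :=
    (le_div_iff₀ hc').1 (Nat.floor_le (div_nonneg (sub_nonneg.2 hab) hc'.le))
  rw [← ENNReal.ofReal_natCast, ← ENNReal.ofReal_coe_nnreal, ← ENNReal.ofReal_mul (by positivity)]
  refine ENNReal.ofReal_le_ofReal ?_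
  push_cast
  linarith

theorem exists_prod_Icc_cover {X : Type*} [PseudoEMetricSpace X] {A : Set X} {t : ℕ → Set X}
    {c : ℕ → ℝ≥0} (hA : A ⊆ ⋃ i, t i) (hc : ∀ i, 0 < c i ∧ ediam (t i) ≤ c i ∧ c i ≤ 1)
    {a b : ℝ} (hab : a ≤ b) {d : ℝ} (hd : 0 ≤ d) :
    ∃ u : ℕ × ℕ → Set (X × ℝ), A ×ˢ Icc a b ⊆ ⋃ k, u k ∧ (∀ k, ediam (u k) ≤ c k.1) ∧
      ∑' k, ediam (u k) ^ (d + 1) ≤ ENNReal.ofReal (b - a + 1) * ∑' i, (c i : ℝ≥0∞) ^ d := by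
  set N : ℕ → ℕ := fun i => ⌊(b - a) / c i⌋₊
  set u : ℕ × ℕ → Set (X × ℝ) := fun k =>
    if k.2 ≤ N k.1 then t k.1 ×ˢ Icc (a + k.2 * c k.1) (a + (k.2 + 1) * c k.1) else ∅
  have hdiam : ∀ k, ediam (u k) ≤ c k.1 := by
    rintro ⟨i, j⟩
    simp only [u]
    split_ifs
    · refine (ediam_prod_le _ _).trans (max_le (hc i).2.1 ?_)
      rw [Real.ediam_Icc, ← ENNReal.ofReal_coe_nnreal]
      exact ENNReal.ofReal_le_ofReal (le_of_eq (by ring))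
    · simp
  refine ⟨u, ?_, hdiam, ?_⟩
  · rintro ⟨x, y⟩ ⟨hx, hy⟩
    obtain ⟨i, hi⟩ := mem_iUnion.1 (hA hx)
    obtain ⟨j, hj, hy⟩ := mem_iUnion₂.1 (Icc_subset_biUnion_Icc_add_mul (hc i).1 hy)
    have hjN : j ≤ N i := Nat.lt_succ_iff.1 (Finset.mem_range.1 hj)
    exact mem_iUnion.2 ⟨(i, j), by simp only [u, if_pos hjN]; exact ⟨hi, hy⟩⟩
  rw [ENNReal.tsum_prod (f := fun i j => ediam (u (i, j)) ^ (d + 1)), ← ENNReal.tsum_mul_left]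
  refine ENNReal.tsum_le_tsum fun i => ?_
  have hci : (c i : ℝ≥0∞) ≠ 0 := ENNReal.coe_ne_zero.2 (hc i).1.ne'
  rw [tsum_eq_sum (s := Finset.range (N i + 1)) fun j hj => by
    simp [u, show ¬ j ≤ N i by simpa [Nat.lt_succ_iff] using hj,
      ENNReal.zero_rpow_of_pos (by linarith : 0 < d + 1)]]
  calc ∑ j ∈ Finset.range (N i + 1), ediam (u (i, j)) ^ (d + 1)
      ≤ ∑ j ∈ Finset.range (N i + 1), (c i : ℝ≥0∞) ^ (d + 1) :=
        Finset.sum_le_sum fun j _ => ENNReal.rpow_le_rpow (hdiam (i, j)) (by linarith)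
    _ = ((N i + 1 : ℕ) : ℝ≥0∞) * c i * (c i : ℝ≥0∞) ^ d := by
        rw [Finset.sum_const, Finset.card_range, nsmul_eq_mul,
          ENNReal.rpow_add _ _ hci ENNReal.coe_ne_top, ENNReal.rpow_one]
        ring
    _ ≤ ENNReal.ofReal (b - a + 1) * (c i : ℝ≥0∞) ^ d := by
        gcongr
        exact natCast_floor_div_add_one_mul_le hab (hc i).1 (hc i).2.2

section HausdorffMeasure

variable {X : Type*} [EMetricSpace X] [MeasurableSpace X] [BorelSpace X]

theorem hausdorffMeasure_eq_zero_of_forall_cover {ι : Type*} [Countable ι] {d : ℝ} {S : Set X}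
    (h : ∀ r η : ℝ≥0∞, 0 < r → 0 < η → ∃ t : ι → Set X,
      S ⊆ ⋃ i, t i ∧ (∀ i, ediam (t i) ≤ r) ∧ ∑' i, ediam (t i) ^ d ≤ η) :
    μH[d] S = 0 := by
  choose t hSt htr hsum using fun k : ℕ =>
    have hk : 0 < (k : ℝ≥0∞)⁻¹ := ENNReal.inv_pos.2 (natCast_ne_top k)
    h _ _ hk hk
  refine le_antisymm ?_ zero_le
  calc μH[d] S ≤ liminf (fun k : ℕ => ∑' i, ediam (t k i) ^ d) atTop :=
        Measure.hausdorffMeasure_le_liminf_tsum d S _ ENNReal.tendsto_inv_nat_nhds_zero t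
          (Eventually.of_forall htr) (Eventually.of_forall hSt)
    _ ≤ liminf (fun k : ℕ => (k : ℝ≥0∞)⁻¹) atTop := liminf_le_liminf (Eventually.of_forall hsum)
    _ = 0 := ENNReal.tendsto_inv_nat_nhds_zero.liminf_eq

theorem exists_cover_of_hausdorffMeasure_eq_zero {d : ℝ} (hd : 0 < d) {A : Set X}
    (hA : μH[d] A = 0) {r η : ℝ≥0∞} (hr : 0 < r) (hη : 0 < η) :
    ∃ t : ℕ → Set X, A ⊆ ⋃ i, t i ∧ (∀ i, ediam (t i) ≤ r) ∧ ∑' i, ediam (t i) ^ d < η := by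
  simp only [Measure.hausdorffMeasure_apply, ENNReal.iSup_eq_zero] at hA
  obtain ⟨t, htA, htr, hsum⟩ := by simpa only [iInf_lt_iff] using (hA r hr).trans_lt hη
  refine ⟨t, htA, htr, lt_of_le_of_lt (ENNReal.tsum_le_tsum fun i => ?_) hsum⟩
  rcases (t i).eq_empty_or_nonempty with he | hne
  · simp [he, ENNReal.zero_rpow_of_pos hd]
  · exact le_iSup_of_le hne le_rfl

/-- Pieces of zero diameter get a positive mesh size `c i`, paid for by a summable error, so that
an interval can be chopped into finitely many pieces of length `c i`. -/
theorem exists_pos_cover_of_hausdorffMeasure_eq_zero {d : ℝ} (hd : 0 < d) {A : Set X}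
    (hA : μH[d] A = 0) {r η : ℝ≥0∞} (hr : 0 < r) (hη : 0 < η) :
    ∃ (t : ℕ → Set X) (c : ℕ → ℝ≥0), A ⊆ ⋃ i, t i ∧
      (∀ i, 0 < c i ∧ ediam (t i) ≤ c i ∧ (c i : ℝ≥0∞) ≤ r) ∧ ∑' i, (c i : ℝ≥0∞) ^ d ≤ η := by
  obtain ⟨r₀, hr₀, hr₀r⟩ := ENNReal.lt_iff_exists_nnreal_btwn.1 hr
  obtain ⟨t, htA, htr, hsum⟩ :=
    exists_cover_of_hausdorffMeasure_eq_zero hd hA hr₀ (ENNReal.half_pos hη.ne')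
  obtain ⟨ε, hε, hεsum⟩ := ENNReal.exists_pos_sum_of_countable (ENNReal.half_pos hη.ne').ne' ℕ
  have hfin : ∀ i, ediam (t i) ≠ ∞ := fun i => ((htr i).trans_lt coe_lt_top).ne
  set ρ : ℕ → ℝ≥0 := fun i => min r₀ (ε i ^ (1 / d))
  refine ⟨t, fun i => max (ediam (t i)).toNNReal (ρ i), htA, fun i => ⟨?_, ?_, ?_⟩, ?_⟩
  · exact lt_max_of_lt_right (lt_min (ENNReal.coe_pos.1 hr₀) (NNReal.rpow_pos (hε i)))
  · rw [ENNReal.coe_max, ENNReal.coe_toNNReal (hfin i)]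
    exact le_max_left _ _
  · rw [ENNReal.coe_max, ENNReal.coe_toNNReal (hfin i)]
    exact max_le (htr i) (ENNReal.coe_le_coe.2 (min_le_left _ _)) |>.trans hr₀r.le
  · have hρ : ∀ i, (ρ i : ℝ≥0∞) ^ d ≤ ε i := fun i => by
      rw [← ENNReal.coe_rpow_of_nonneg _ hd.le, ENNReal.coe_le_coe,
        ← NNReal.rpow_self_rpow_inv hd.ne' (ε i)]
      exact NNReal.monotone_rpow_of_nonneg hd.le (min_le_right _ _)
    calc ∑' i, ((max (ediam (t i)).toNNReal (ρ i) : ℝ≥0) : ℝ≥0∞) ^ d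
        ≤ ∑' i, (ediam (t i) ^ d + ε i) := ENNReal.tsum_le_tsum fun i => by
          rw [ENNReal.coe_max, ENNReal.coe_toNNReal (hfin i),
            (ENNReal.monotone_rpow_of_nonneg hd.le).map_max]
          exact max_le le_self_add ((hρ i).trans le_add_self)
      _ ≤ η / 2 + η / 2 := by
          rw [ENNReal.tsum_add]; exact add_le_add hsum.le hεsum.le
      _ = η := ENNReal.add_halves η

end HausdorffMeasure

theorem dimH_prod_Icc_le {X : Type*} [EMetricSpace X] (A : Set X) (a b : ℝ) :
    dimH (A ×ˢ Icc a b) ≤ dimH A + 1 := by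
  rcases lt_or_ge b a with hba | hab
  · simp [Icc_eq_empty hba.not_ge]
  -- Borel structure on `X × ℝ` first: the product σ-algebra need not be the Borel one.
  borelize (X × ℝ)
  borelize X
  refine dimH_le fun d hd => ?_
  by_contra! hlt
  have h1 : (1 : ℝ≥0) < d := ENNReal.coe_lt_coe.1 (lt_of_le_of_lt le_add_self hlt)
  set s : ℝ≥0 := d - 1
  have hs : dimH A < s := by
    rw [ENNReal.coe_sub, ENNReal.coe_one]
    exact lt_tsub_iff_right.2 hlt
  have hs0 : (0 : ℝ) < s := NNReal.coe_pos.2 (tsub_pos_of_lt h1)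
  have hK : ENNReal.ofReal (b - a + 1) ≠ ∞ := ofReal_ne_top
  have hnull : μH[(s : ℝ) + 1] (A ×ˢ Icc a b) = 0 :=
    hausdorffMeasure_eq_zero_of_forall_cover fun r η hr hη => by
      obtain ⟨t, c, hAt, hc, hsum⟩ := exists_pos_cover_of_hausdorffMeasure_eq_zero hs0
        (hausdorffMeasure_of_dimH_lt hs) (lt_min hr one_pos)
        (ENNReal.div_pos_iff.2 ⟨hη.ne', hK⟩)
      obtain ⟨u, hAu, hu, husum⟩ := exists_prod_Icc_cover hAt (fun i => ⟨(hc i).1, (hc i).2.1,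
        ENNReal.coe_le_one_iff.1 ((hc i).2.2.trans (min_le_right _ _))⟩) hab hs0.le
      exact ⟨u, hAu, fun k => (hu k).trans ((hc k.1).2.2.trans (min_le_left _ _)),
        husum.trans ((mul_le_mul_right hsum _).trans ENNReal.mul_div_le)⟩
  have hsd : (s : ℝ) + 1 = d := by rw [NNReal.coe_sub h1.le]; simp
  rw [hsd] at hnull
  exact ENNReal.zero_ne_top (hnull ▸ hd)

theorem dimH_prod_le_add_one {X : Type*} [EMetricSpace X] (A : Set X) (B : Set ℝ) :
    dimH (A ×ˢ B) ≤ dimH A + 1 :=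
  calc dimH (A ×ˢ B) ≤ dimH (⋃ k : ℕ, A ×ˢ Icc (-k : ℝ) k) := by
        refine dimH_mono fun x hx => mem_iUnion.2 ⟨⌈|x.2|⌉₊, hx.1, ?_⟩
        exact abs_le.1 (Nat.le_ceil _)
    _ ≤ dimH A + 1 := by
        rw [dimH_iUnion]
        exact iSup_le fun k => dimH_prod_Icc_le A _ _

section NormedSpace

variable {E : Type*} [NormedAddCommGroup E] [NormedSpace ℝ E]

def radialShadow (p : E) (Z : Set E) : Set E :=
  (fun x : E × ℝ => lineMap p x.1 x.2) '' (Z ×ˢ Ici 1)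

theorem dimH_radialShadow_le [FiniteDimensional ℝ E] (p : E) (Z : Set E) :
    dimH (radialShadow p Z) ≤ dimH Z + 1 := by
  have hsmooth : ContDiff ℝ 1 fun x : E × ℝ => lineMap p x.1 x.2 := by
    simp only [lineMap_apply_module']
    fun_prop
  exact (hsmooth.contDiffOn.dimH_image_le convex_univ (subset_univ _)).trans
    (dimH_prod_le_add_one Z _)

theorem disjoint_segment_of_notMem_radialShadow {p m : E} {Z : Set E} (hp : p ∉ Z)
    (hm : m ∉ radialShadow p Z) : Disjoint (segment ℝ p m) Z := by
  rw [Set.disjoint_left, segment_eq_image_lineMap]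
  rintro _ ⟨τ, hτ, rfl⟩ hZ
  rcases hτ.1.eq_or_lt with rfl | hτ0
  · exact hp (by simpa using hZ)
  · refine hm ⟨(lineMap p m τ, τ⁻¹), ⟨hZ, one_le_inv₀ hτ0 |>.2 hτ.2⟩, ?_⟩
    simp [lineMap_apply_module', smul_smul, inv_mul_cancel₀ hτ0.ne']

theorem eVariationOn_lineMap_comp_le (p q : E) {φ : ℝ → ℝ} {s : Set ℝ} (hφ : MonotoneOn φ s)
    (hφs : MapsTo φ s (Icc 0 1)) : eVariationOn (lineMap p q ∘ φ) s ≤ edist p q :=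
  calc eVariationOn (lineMap p q ∘ φ) s = eVariationOn (lineMap p q) (φ '' s) :=
        eVariationOn.comp_eq_of_monotoneOn _ φ hφ
    _ ≤ eVariationOn (lineMap p q) (Icc (0 : ℝ) 1) := eVariationOn.mono _ hφs.image_subset
    _ = eVariationOn (lineMap p q ∘ id) (Icc (0 : ℝ) 1) := rfl
    _ ≤ nndist p q * eVariationOn id (Icc (0 : ℝ) 1) :=
        (lipschitzWith_lineMap p q).lipschitzOnWith.comp_eVariationOn_le (mapsTo_id _)
    _ = edist p q := by simp

noncomputable def brokenPath (p m q : E) (t : ℝ) : E :=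
  if t ≤ 1 / 2 then lineMap p m (2 * t) else lineMap m q (2 * t - 1)

@[simp] theorem brokenPath_zero (p m q : E) : brokenPath p m q 0 = p := by simp [brokenPath]

@[simp] theorem brokenPath_one (p m q : E) : brokenPath p m q 1 = q := by norm_num [brokenPath]

theorem continuous_brokenPath (p m q : E) : Continuous (brokenPath p m q) :=
  Continuous.if_le (by fun_prop) (by fun_prop) continuous_id continuous_const
    fun t ht => by simp [ht]

theorem brokenPath_mem_segment_union (p m q : E) {t : ℝ} (ht : t ∈ Icc (0 : ℝ) 1) :
    brokenPath p m q t ∈ segment ℝ p m ∪ segment ℝ m q := by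
  unfold brokenPath
  split_ifs with h
  · exact Or.inl (lineMap_mem_segment ℝ p m ⟨by linarith [ht.1], by linarith⟩)
  · exact Or.inr (lineMap_mem_segment ℝ m q ⟨by linarith, by linarith [ht.2]⟩)

theorem eVariationOn_brokenPath_le (p m q : E) :
    eVariationOn (brokenPath p m q) (Icc 0 1) ≤ edist p m + edist m q := by
  have hsplit := eVariationOn.Icc_add_Icc (brokenPath p m q) (by norm_num : (0 : ℝ) ≤ 1 / 2)
    (by norm_num : (1 / 2 : ℝ) ≤ 1) (mem_univ _)
  simp only [univ_inter] at hsplit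
  rw [← hsplit]
  have h₁ : EqOn (brokenPath p m q) (lineMap p m ∘ (2 * ·)) (Icc 0 (1 / 2)) :=
    fun t ht => if_pos ht.2
  have h₂ : EqOn (brokenPath p m q) (lineMap m q ∘ (2 * · - 1)) (Icc (1 / 2) 1) := by
    intro t ht
    rcases ht.1.eq_or_lt with rfl | h
    · norm_num [brokenPath]
    · exact if_neg h.not_ge
  rw [eVariationOn.eq_of_eqOn h₁, eVariationOn.eq_of_eqOn h₂]
  gcongr
  · exact eVariationOn_lineMap_comp_le p m (fun x _ y _ h => by linarith)
      fun t ht => ⟨by linarith [ht.1], by linarith [ht.2]⟩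
  · exact eVariationOn_lineMap_comp_le m q (fun x _ y _ h => by linarith)
      fun t ht => ⟨by linarith [ht.1], by linarith [ht.2]⟩

theorem dist_add_dist_lt_of_dist_midpoint_lt {p q m : E} {ε : ℝ}
    (h : dist m (midpoint ℝ p q) < ε / 2) :
    dist p m + dist m q < dist p q + ε := by
  have h₁ := dist_triangle p (midpoint ℝ p q) m
  have h₂ := dist_triangle m (midpoint ℝ p q) q
  rw [dist_comm (midpoint ℝ p q) m] at h₁
  have h₃ : dist p (midpoint ℝ p q) + dist (midpoint ℝ p q) q = dist p q := by
    rw [dist_left_midpoint, dist_midpoint_right, Real.norm_ofNat]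
    ring
  linarith

theorem brokenPath_mem_diff_of_notMem_radialShadow {U Z : Set E} (hU : Convex ℝ U) {p m q : E}
    (hp : p ∈ U \ Z) (hq : q ∈ U \ Z) (hmU : m ∈ U)
    (hm : m ∉ radialShadow p Z ∪ radialShadow q Z) {t : ℝ} (ht : t ∈ Icc (0 : ℝ) 1) :
    brokenPath p m q t ∈ U \ Z := by
  rcases brokenPath_mem_segment_union p m q ht with h | h
  · exact ⟨hU.segment_subset hp.1 hmU h, (disjoint_segment_of_notMem_radialShadow hp.2
      fun h' => hm (Or.inl h')).notMem_of_mem_left h⟩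
  · rw [segment_symm] at h
    exact ⟨hU.segment_subset hq.1 hmU h, (disjoint_segment_of_notMem_radialShadow hq.2
      fun h' => hm (Or.inr h')).notMem_of_mem_left h⟩

end NormedSpace

theorem intrinsic_distance_of_remove_small_closed_general (n : ℕ)
    (Z : Set (EuclideanSpace ℝ (Fin n)))
    (hZd : dimH Z < (n : ℝ≥0∞) - 1)
    (U : Set (EuclideanSpace ℝ (Fin n))) (hUo : IsOpen U) (hUconv : Convex ℝ U)
    (p q : EuclideanSpace ℝ (Fin n)) (hp : p ∈ U \ Z) (hq : q ∈ U \ Z)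
    (ε : ℝ) (hε : 0 < ε) :
    ∃ γ : ℝ → EuclideanSpace ℝ (Fin n),
      ContinuousOn γ (Set.Icc 0 1) ∧
      γ 0 = p ∧ γ 1 = q ∧
      (∀ t ∈ Set.Icc (0 : ℝ) 1, γ t ∈ U \ Z) ∧
      eVariationOn γ (Set.Icc 0 1) ≤ ENNReal.ofReal (dist p q + ε) := by
  have hZ : dimH Z + 1 < n := lt_tsub_iff_right.1 hZd
  have hdense : Dense (radialShadow p Z ∪ radialShadow q Z)ᶜ := by
    refine dense_compl_of_dimH_lt_finrank ?_
    rw [finrank_euclideanSpace_fin, dimH_union]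
    exact max_lt ((dimH_radialShadow_le p Z).trans_lt hZ)
      ((dimH_radialShadow_le q Z).trans_lt hZ)
  obtain ⟨δ, hδ, hδU⟩ := Metric.isOpen_iff.1 hUo _
    (hUconv.segment_subset hp.1 hq.1 (midpoint_mem_segment p q))
  obtain ⟨m, hm, hmc⟩ := hdense.exists_mem_open isOpen_ball
    ⟨_, mem_ball_self (lt_min hδ (half_pos hε))⟩
  have hmU : m ∈ U := hδU (ball_subset_ball (min_le_left _ _) hmc)
  refine ⟨brokenPath p m q, (continuous_brokenPath p m q).continuousOn, brokenPath_zero p m q,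
    brokenPath_one p m q,
    fun _ => brokenPath_mem_diff_of_notMem_radialShadow hUconv hp hq hmU hm,
    (eVariationOn_brokenPath_le p m q).trans ?_⟩
  rw [edist_dist, edist_dist, ← ENNReal.ofReal_add dist_nonneg dist_nonneg]
  exact ENNReal.ofReal_le_ofReal
    (dist_add_dist_lt_of_dist_midpoint_lt (lt_of_lt_of_le hmc (min_le_right _ _))).le

/-- In a convex open subset of Euclidean n-space minus a closed set Z of
Hausdorff dimension < n − 1, any two points can be joined by a continuous path
avoiding Z whose length (total variation) exceeds the ambient distance by at
most ε. -/
theorem intrinsic_distance_of_remove_small_closed (n : ℕ) (hn : 1 ≤ n)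
    (Z : Set (EuclideanSpace ℝ (Fin n))) (hZc : IsClosed Z)
    (hZd : dimH Z < (n : ℝ≥0∞) - 1)
    (U : Set (EuclideanSpace ℝ (Fin n))) (hUo : IsOpen U) (hUconv : Convex ℝ U)
    (p q : EuclideanSpace ℝ (Fin n)) (hp : p ∈ U \ Z) (hq : q ∈ U \ Z)
    (ε : ℝ) (hε : 0 < ε) :
    ∃ γ : ℝ → EuclideanSpace ℝ (Fin n),
      ContinuousOn γ (Set.Icc 0 1) ∧
      γ 0 = p ∧ γ 1 = q ∧
      (∀ t ∈ Set.Icc (0 : ℝ) 1, γ t ∈ U \ Z) ∧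
      eVariationOn γ (Set.Icc 0 1) ≤ ENNReal.ofReal (dist p q + ε) :=
  intrinsic_distance_of_remove_small_closed_general n Z hZd U hUo hUconv p q hp hq ε hε
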